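/- arXiv:1001.5176 — 2 statements merged into one kernel-verified Lean document; each statement's English description precedes it below -/
import Mathlib

section
/- Let Y = f⁰ + ε with ε ∈ ℝ^n satisfying max_{1≤j≤p} 4|ε·ψ_j|/n ≤ λ_init. Suppose w_j > 0 for all j, let β̂_weight be any minimizer over ℝ^p of β ↦ ‖Y − Xβ‖_n² + λ_init·λ_weight·Σ_{j=1}^p w_j|β_j| (λ_init, λ_weight > 0), and let Ŝ_weight := {j : (β̂_weight)_j ≠ 0}. Let S, S₀ ⊆ {1,…,p} be index sets with λ_weight·min_{j∉S} w_j ≥ 1, and set A := (Ŝ_weight ∩ S^c)∖S₀. (i) If Λ ≥ 0 satisfies ‖Xγ‖_n ≤ Λ‖γ‖_2 for every γ supported on A, then |A|² ≤ 16Λ²·(‖Xβ̂_weight − f⁰‖_n²/λ_weight²)·(Σ_{j∈Ŝ_weight∖S₀} w_j^{−2})/λ_init². (ii) If in addition |A| > s₀ := |S₀| ≥ 1 and Λ_s ≥ 0 satisfies ‖Xγ‖_n ≤ Λ_s‖γ‖_2 for every γ supported on an index set of cardinality at most s₀, then |A| ≤ 32Λ_s²·(‖Xβ̂_weight − f⁰‖_n²/(λ_weight²·s₀))·(Σ_{j∈Ŝ_weight∖S₀}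 w_j^{−2})/λ_init². -/
/-!
On the event `4 |εᵀψ_j| / n ≤ λ_init`, the KKT conditions of the weighted Lasso give
`|ψ_jᵀ(Xβ̂ - f⁰)| ≥ n λ_init λ_weight w_j / 4` at every selected `j` with `λ_weight w_j ≥ 1`.
Testing `Xβ̂ - f⁰` against `Xγ`, where `γ_j = sign(ψ_jᵀ(Xβ̂ - f⁰)) / w_j` on `A` and `0` elsewhere,
Cauchy–Schwarz bounds `|A| n λ_init λ_weight / 4` by `√n Λ ‖γ‖₂ ‖Xβ̂ - f⁰‖₂`, and
`‖γ‖₂² ≤ ∑ w_j⁻²`; this is (i). For (ii), cutting `A` into `⌈|A| / s₀⌉ ≤ 2 |A| / s₀` blocks of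
size at most `s₀` and using the triangle inequality shows that `Λ_s √(2 |A| / s₀)` is an
admissible `Λ` in (i).
-/

open Matrix

theorem add_mul_sign_eq_zero_of_forall_nonneg {a b c x : ℝ} (hx : x ≠ 0)
    (h : ∀ t, 0 ≤ a * t ^ 2 + b * t + c * (|x + t| - |x|)) : b + c * SignType.sign x = 0 := by
  have hmin : IsLocalMin (fun t => a * t ^ 2 + b * t + c * (|x + t| - |x|)) 0 :=
    Filter.Eventually.of_forall fun t => by simpa using h t
  have habs : HasDerivAt (fun t => |x + t|) (SignType.sign x : ℝ) 0 := by
    simpa using (hasDerivAt_abs (by simpa using hx)).comp_const_add x 0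
  have hderiv : HasDerivAt (fun t => a * t ^ 2 + b * t + c * (|x + t| - |x|))
      (a * (2 * 0) + b * 1 + c * SignType.sign x) 0 :=
    ((((hasDerivAt_id' 0).pow 2).const_mul a).add ((hasDerivAt_id' 0).const_mul b)).add
      ((habs.sub_const |x|).const_mul c) |>.congr_deriv (by simp)
  simpa using hmin.hasDerivAt_eq_zero hderiv

theorem le_abs_of_two_mul_sub_div_eq {N L c s e z : ℝ} (hN : 0 < N) (hc : 1 ≤ c) (hs : |s| = 1)
    (he : 4 * |e| / N ≤ L) (hkkt : 2 * (e - z) / N = L * c * s) : N * L * c / 4 ≤ |z| := by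
  have hL : 0 ≤ L := le_trans (by positivity) he
  have hez : |e - z| = N * L * c / 2 := by
    rw [div_eq_iff hN.ne'] at hkkt
    rw [show e - z = N * (L * c * s) / 2 by linarith, abs_div, abs_mul, abs_mul, abs_mul, hs,
      abs_of_pos hN, abs_of_nonneg hL, abs_of_nonneg (by linarith : (0 : ℝ) ≤ c)]
    norm_num [mul_assoc]
  have he' : |e| ≤ N * L / 4 := by rw [div_le_iff₀ hN] at he; linarith
  have hrev := abs_sub_abs_le_abs_sub (e - z) e
  rw [sub_sub_cancel_left, abs_neg] at hrev
  nlinarith [mul_nonneg (mul_nonneg hN.le hL) (sub_nonneg.2 hc)]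

theorem sqrt_sum_sq_div_add_le {ι : Type*} [Fintype ι] (u v : ι → ℝ) (c : ℝ) :
    √((∑ i, (u i + v i) ^ 2) / c) ≤ √((∑ i, u i ^ 2) / c) + √((∑ i, v i ^ 2) / c) := by
  have htri : √(∑ i, (u i + v i) ^ 2) ≤ √(∑ i, u i ^ 2) + √(∑ i, v i ^ 2) := by
    simpa [EuclideanSpace.norm_eq] using
      norm_add_le (WithLp.toLp 2 u : EuclideanSpace ℝ ι) (WithLp.toLp 2 v)
  simp only [Real.sqrt_div (Finset.sum_nonneg fun i _ => sq_nonneg _) c, ← add_div]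
  exact div_le_div_of_nonneg_right htri (Real.sqrt_nonneg c)

theorem mul_add_mul_le_sqrt_mul_sqrt (a b x y : ℝ) :
    a * x + b * y ≤ √(a ^ 2 + b ^ 2) * √(x ^ 2 + y ^ 2) := by
  rw [← Real.sqrt_mul (by positivity)]
  exact (le_abs_self _).trans (Real.abs_le_sqrt (by nlinarith [sq_nonneg (a * y - b * x)]))

section WeightedLasso

variable {n : ℕ} {ι : Type*} [Fintype ι] (X : Matrix (Fin n) ι ℝ) (Y : Fin n → ℝ) (lam : ℝ)
  (w : ι → ℝ)

noncomputable def weightedLassoObjective (β : ι → ℝ) : ℝ :=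
  (∑ i, (Y i - X.mulVec β i) ^ 2) / n + lam * ∑ j, w j * |β j|

theorem weightedLassoObjective_add_single [DecidableEq ι] (β : ι → ℝ) (j : ι) (t : ℝ) :
    weightedLassoObjective X Y lam w (β + Pi.single j t) =
      weightedLassoObjective X Y lam w β + (∑ i, X i j ^ 2) / n * t ^ 2
        - 2 * ((Y - X *ᵥ β) ᵥ* X) j / n * t + lam * w j * (|β j + t| - |β j|) := by
  have hfit : ∑ i, (Y i - X.mulVec (β + Pi.single j t) i) ^ 2 =
      ∑ i, (Y i - X.mulVec β i) ^ 2 + (∑ i, X i j ^ 2) * t ^ 2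
        - 2 * ((Y - X *ᵥ β) ᵥ* X) j * t := by
    simp only [mulVec_add, mulVec_single, vecMul, dotProduct, Pi.add_apply, Pi.sub_apply,
      Pi.smul_apply, col_apply, MulOpposite.smul_eq_mul_unop, MulOpposite.unop_op,
      Finset.sum_mul, Finset.mul_sum, ← Finset.sum_add_distrib, ← Finset.sum_sub_distrib]
    exact Finset.sum_congr rfl fun i _ => by ring
  have hpen : ∑ k, w k * |(β + Pi.single j t : ι → ℝ) k| =
      ∑ k, w k * |β k| + w j * (|β j + t| - |β j|) := by
    rw [← sub_eq_iff_eq_add', ← Finset.sum_sub_distrib,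
      Fintype.sum_eq_single j fun k hk => by simp [hk]]
    simp [mul_sub]
  rw [weightedLassoObjective, weightedLassoObjective, hfit, hpen]
  ring

theorem weightedLassoObjective_kkt [DecidableEq ι] {β : ι → ℝ}
    (hβ : ∀ β', weightedLassoObjective X Y lam w β ≤ weightedLassoObjective X Y lam w β')
    {j : ι} (hj : β j ≠ 0) :
    2 * ((Y - X *ᵥ β) ᵥ* X) j / n = lam * w j * SignType.sign (β j) := by
  have h := add_mul_sign_eq_zero_of_forall_nonneg (a := (∑ i, X i j ^ 2) / n)
    (b := -(2 * ((Y - X *ᵥ β) ᵥ* X) j / n)) (c := lam * w j) hj fun t => by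
      have := hβ (β + Pi.single j t)
      rw [weightedLassoObjective_add_single] at this
      linarith
  linarith

theorem weightedLasso_le_abs_vecMul_residual [DecidableEq ι] (hn : 0 < n) {f0 ε : Fin n → ℝ}
    {lamInit lamWeight : ℝ} {β : ι → ℝ}
    (hβ : ∀ β', weightedLassoObjective X (f0 + ε) (lamInit * lamWeight) w β ≤
      weightedLassoObjective X (f0 + ε) (lamInit * lamWeight) w β')
    {j : ι} (hj : β j ≠ 0) (hwj : 1 ≤ lamWeight * w j)
    (hnoise : 4 * |(ε ᵥ* X) j| / n ≤ lamInit) :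
    n * lamInit * lamWeight / 4 * w j ≤ |((X *ᵥ β - f0) ᵥ* X) j| := by
  have hkkt := weightedLassoObjective_kkt X (f0 + ε) _ w hβ hj
  rw [show f0 + ε - X *ᵥ β = ε - (X *ᵥ β - f0) by abel, sub_vecMul, Pi.sub_apply] at hkkt
  have hsign : |(SignType.sign (β j) : ℝ)| = 1 := by
    rcases hj.lt_or_gt with h | h <;> simp [h]
  calc n * lamInit * lamWeight / 4 * w j = n * lamInit * (lamWeight * w j) / 4 := by ring
    _ ≤ _ := le_abs_of_two_mul_sub_div_eq (by exact_mod_cast hn) hwj hsign hnoise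
        (hkkt.trans (by ring))

end WeightedLasso

section RestrictedNormBound

variable {n : ℕ} {ι : Type*} [Fintype ι] (X : Matrix (Fin n) ι ℝ)

def RestrictedNormBound (A : Finset ι) (Λ : ℝ) : Prop :=
  ∀ γ : ι → ℝ, (∀ j ∉ A, γ j = 0) →
    √((∑ i, (X.mulVec γ i) ^ 2) / n) ≤ Λ * √(∑ j, γ j ^ 2)

variable {X}

theorem RestrictedNormBound.mono {A : Finset ι} {Λ Λ' : ℝ} (h : RestrictedNormBound X A Λ)
    (hΛ : Λ ≤ Λ') : RestrictedNormBound X A Λ' :=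
  fun γ hγ => (h γ hγ).trans (mul_le_mul_of_nonneg_right hΛ (Real.sqrt_nonneg _))

theorem RestrictedNormBound.union [DecidableEq ι] {T U : Finset ι} {a b : ℝ}
    (hT : RestrictedNormBound X T a) (hU : RestrictedNormBound X U b) :
    RestrictedNormBound X (T ∪ U) √(a ^ 2 + b ^ 2) := by
  intro γ hγ
  set γT : ι → ℝ := fun j => if j ∈ T then γ j else 0
  set γU : ι → ℝ := fun j => if j ∈ T then 0 else γ j
  have hsplit : γ = γT + γU := funext fun j => by by_cases hj : j ∈ T <;> simp [γT, γU, hj]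
  have hγT : ∀ j ∉ T, γT j = 0 := fun j hj => if_neg hj
  have hγU : ∀ j ∉ U, γU j = 0 := fun j hj => by
    by_cases hjT : j ∈ T
    · exact if_pos hjT
    · exact (if_neg hjT).trans (hγ j (by simp [hj, hjT]))
  have hsq : ∑ j, γ j ^ 2 = ∑ j, γT j ^ 2 + ∑ j, γU j ^ 2 := by
    rw [← Finset.sum_add_distrib]
    exact Finset.sum_congr rfl fun j _ => by by_cases hj : j ∈ T <;> simp [γT, γU, hj]
  calc √((∑ i, (X.mulVec γ i) ^ 2) / n)
      ≤ √((∑ i, (X.mulVec γT i) ^ 2) / n) + √((∑ i, (X.mulVec γU i) ^ 2) / n) := by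
        rw [hsplit, Matrix.mulVec_add]; exact sqrt_sum_sq_div_add_le _ _ _
    _ ≤ a * √(∑ j, γT j ^ 2) + b * √(∑ j, γU j ^ 2) := add_le_add (hT γT hγT) (hU γU hγU)
    _ ≤ √(a ^ 2 + b ^ 2) * √(∑ j, γ j ^ 2) := by
        have := mul_add_mul_le_sqrt_mul_sqrt a b √(∑ j, γT j ^ 2) √(∑ j, γU j ^ 2)
        rwa [Real.sq_sqrt (by positivity), Real.sq_sqrt (by positivity), ← hsq] at this

theorem RestrictedNormBound.of_card_le_mul [DecidableEq ι] {s : ℕ} {Λ : ℝ}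
    (h : ∀ T : Finset ι, T.card ≤ s → RestrictedNormBound X T Λ) (m : ℕ) :
    ∀ A : Finset ι, A.card ≤ m * s → RestrictedNormBound X A √(m * Λ ^ 2) := by
  induction m with
  | zero =>
    intro A hA γ hγ
    obtain rfl : γ = 0 := funext fun j => hγ j (by simp_all)
    simp
  | succ m ih =>
    intro A hA
    obtain ⟨T, hTA, hT⟩ := Finset.exists_subset_card_eq (min_le_right s A.card)
    have hrest : (A \ T).card ≤ m * s := by
      rw [Finset.card_sdiff_of_subset hTA, hT]; grind
    have := (h T (hT ▸ min_le_left _ _)).union (ih _ hrest)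
    rw [Finset.union_sdiff_of_subset hTA, Real.sq_sqrt (by positivity)] at this
    convert this using 2
    push_cast; ring

theorem RestrictedNormBound.sum_sq_mulVec_le (hn : 0 < n) {A : Finset ι} {Λ : ℝ}
    (hΛ : RestrictedNormBound X A Λ) {γ : ι → ℝ} (hγ : ∀ j ∉ A, γ j = 0) :
    ∑ i, (X *ᵥ γ) i ^ 2 ≤ n * (Λ ^ 2 * ∑ j, γ j ^ 2) := by
  have h := pow_le_pow_left₀ (Real.sqrt_nonneg _) (hΛ γ hγ) 2
  rwa [Real.sq_sqrt (by positivity), mul_pow, Real.sq_sqrt (by positivity),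
    div_le_iff₀' (by exact_mod_cast hn)] at h

theorem RestrictedNormBound.card_mul_sq_le (hn : 0 < n) {A : Finset ι} {Λ : ℝ}
    (hΛ : RestrictedNormBound X A Λ) (r : Fin n → ℝ) {w : ι → ℝ} (hw : ∀ j ∈ A, 0 < w j)
    {κ : ℝ} (hκ : 0 ≤ κ) (hz : ∀ j ∈ A, κ * w j ≤ |(r ᵥ* X) j|) :
    (A.card * κ) ^ 2 ≤ n * Λ ^ 2 * (∑ j ∈ A, (w j)⁻¹ ^ 2) * ∑ i, r i ^ 2 := by
  classical
  set z := r ᵥ* X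
  set γ : ι → ℝ := fun j => if j ∈ A then SignType.sign (z j) * (w j)⁻¹ else 0
  have hγ : ∀ j ∉ A, γ j = 0 := fun j hj => if_neg hj
  have hγA : ∀ j ∈ A, γ j = SignType.sign (z j) * (w j)⁻¹ := fun j hj => if_pos hj
  have hlower : A.card * κ ≤ γ ⬝ᵥ z := by
    calc A.card * κ = ∑ j ∈ A, κ := by rw [Finset.sum_const, nsmul_eq_mul]
      _ ≤ ∑ j ∈ A, |z j| * (w j)⁻¹ :=
          Finset.sum_le_sum fun j hj => (le_mul_inv_iff₀ (hw j hj)).2 (hz j hj)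
      _ = γ ⬝ᵥ z := by
          rw [dotProduct,
            ← Finset.sum_subset (Finset.subset_univ A) fun j _ hj => by rw [hγ j hj]; ring]
          exact Finset.sum_congr rfl fun j hj => by rw [hγA j hj, mul_right_comm, sign_mul_self]
  have hγsq : ∑ j, γ j ^ 2 ≤ ∑ j ∈ A, (w j)⁻¹ ^ 2 := by
    rw [← Finset.sum_subset (Finset.subset_univ A) fun j _ hj => by rw [hγ j hj]; ring]
    refine Finset.sum_le_sum fun j hj => ?_
    rw [hγA j hj, mul_pow]
    have hsign : (SignType.sign (z j) : ℝ) ^ 2 ≤ 1 := by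
      rcases lt_trichotomy (z j) 0 with h | h | h <;> simp [h]
    exact mul_le_of_le_one_left (sq_nonneg _) hsign
  calc (A.card * κ) ^ 2 ≤ (r ⬝ᵥ X *ᵥ γ) ^ 2 := by
        rw [dotProduct_mulVec, dotProduct_comm]
        exact pow_le_pow_left₀ (by positivity) hlower 2
    _ ≤ (∑ i, r i ^ 2) * ∑ i, (X *ᵥ γ) i ^ 2 := Finset.sum_mul_sq_le_sq_mul_sq _ _ _
    _ ≤ (∑ i, r i ^ 2) * (n * (Λ ^ 2 * ∑ j ∈ A, (w j)⁻¹ ^ 2)) := by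
        grw [hΛ.sum_sq_mulVec_le hn hγ, hγsq]
    _ = n * Λ ^ 2 * (∑ j ∈ A, (w j)⁻¹ ^ 2) * ∑ i, r i ^ 2 := by ring

theorem RestrictedNormBound.of_forall_card_le [DecidableEq ι] {s : ℕ} {Λ : ℝ}
    (h : ∀ T : Finset ι, T.card ≤ s → RestrictedNormBound X T Λ) (hs : 0 < s) {A : Finset ι}
    (hsA : s ≤ A.card) : RestrictedNormBound X A √(2 * A.card / s * Λ ^ 2) := by
  refine (of_card_le_mul h (A.card / s + 1) A ?_).mono ?_
  · exact (Nat.lt_div_mul_add hs).le.trans_eq (by ring)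
  · have hs' : (0 : ℝ) < s := by exact_mod_cast hs
    have hdiv : ((A.card / s : ℕ) : ℝ) ≤ A.card / s := Nat.cast_div_le
    have hone : (1 : ℝ) ≤ A.card / s := by rw [le_div_iff₀ hs']; exact_mod_cast by simpa using hsA
    gcongr
    push_cast
    linarith [show (A.card : ℝ) / s + A.card / s = 2 * A.card / s by ring]

end RestrictedNormBound

theorem weightedLasso_card_mul_sq_le {n : ℕ} {ι : Type*} [Fintype ι] [DecidableEq ι] (hn : 0 < n)
    {X : Matrix (Fin n) ι ℝ} {f0 ε : Fin n → ℝ} {w : ι → ℝ} {lamInit lamWeight : ℝ}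
    (hlamInit : 0 < lamInit) (hlamWeight : 0 < lamWeight) {β : ι → ℝ}
    (hβ : ∀ β', weightedLassoObjective X (f0 + ε) (lamInit * lamWeight) w β ≤
      weightedLassoObjective X (f0 + ε) (lamInit * lamWeight) w β')
    (hnoise : ∀ j, 4 * |(ε ᵥ* X) j| / n ≤ lamInit) {A : Finset ι} {Λ : ℝ}
    (hΛ : RestrictedNormBound X A Λ) (hA : ∀ j ∈ A, β j ≠ 0 ∧ 1 ≤ lamWeight * w j)
    (hw : ∀ j ∈ A, 0 < w j) :
    (A.card * (n * lamInit * lamWeight / 4)) ^ 2 ≤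
      n * Λ ^ 2 * (∑ j ∈ A, (w j)⁻¹ ^ 2) * ∑ i, (X.mulVec β i - f0 i) ^ 2 :=
  hΛ.card_mul_sq_le hn (X *ᵥ β - f0) hw (by positivity) fun j hj =>
    weightedLasso_le_abs_vecMul_residual X w hn hβ (hA j hj).1 (hA j hj).2 (hnoise j)

theorem noisy_weighted_lasso_selection_general
    (n p : ℕ) (hn : 0 < n)
    (X : Matrix (Fin n) (Fin p) ℝ) (f0 : Fin n → ℝ)
    (ε : Fin n → ℝ) (Y : Fin n → ℝ) (hY : ∀ i, Y i = f0 i + ε i)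
    (w : Fin p → ℝ) (hw : ∀ j, 0 < w j)
    (lamInit lamWeight : ℝ) (hlamInit : 0 < lamInit) (hlamWeight : 0 < lamWeight)
    (hnoise : ∀ j, 4 * |∑ i, ε i * X i j| / n ≤ lamInit)
    (βw : Fin p → ℝ)
    (hβw : ∀ β : Fin p → ℝ,
      (∑ i, (Y i - X.mulVec βw i) ^ 2) / n + lamInit * lamWeight * ∑ j, w j * |βw j|
        ≤ (∑ i, (Y i - X.mulVec β i) ^ 2) / n + lamInit * lamWeight * ∑ j, w j * |β j|)
    (Sw : Finset (Fin p)) (hSw : ∀ j, j ∈ Sw ↔ βw j ≠ 0)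
    (S S0 : Finset (Fin p))
    (hlww : ∀ j ∉ S, 1 ≤ lamWeight * w j)
    (Λ : ℝ)
    (hΛ : ∀ γ : Fin p → ℝ, (∀ j ∉ (Sw ∩ Sᶜ) \ S0, γ j = 0) →
      Real.sqrt ((∑ i, (X.mulVec γ i) ^ 2) / n) ≤ Λ * Real.sqrt (∑ j, (γ j) ^ 2))
    (Λs : ℝ)
    (hΛs : ∀ T : Finset (Fin p), T.card ≤ S0.card →
      ∀ γ : Fin p → ℝ, (∀ j ∉ T, γ j = 0) →
      Real.sqrt ((∑ i, (X.mulVec γ i) ^ 2) / n) ≤ Λs * Real.sqrt (∑ j, (γ j) ^ 2)) :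
    (((Sw ∩ Sᶜ) \ S0).card : ℝ) ^ 2
        ≤ 16 * Λ ^ 2 * (((∑ i, (X.mulVec βw i - f0 i) ^ 2) / n) / lamWeight ^ 2)
            * (∑ j ∈ Sw \ S0, ((w j)⁻¹) ^ 2) / lamInit ^ 2
      ∧ (1 ≤ S0.card → S0.card < ((Sw ∩ Sᶜ) \ S0).card →
          (((Sw ∩ Sᶜ) \ S0).card : ℝ)
            ≤ 32 * Λs ^ 2
                * (((∑ i, (X.mulVec βw i - f0 i) ^ 2) / n) / (lamWeight ^ 2 * S0.card))
                * (∑ j ∈ Sw \ S0, ((w j)⁻¹) ^ 2) / lamInit ^ 2) := by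
  obtain rfl : Y = f0 + ε := funext hY
  set A := (Sw ∩ Sᶜ) \ S0
  set R := ∑ i, (X.mulVec βw i - f0 i) ^ 2
  set W := ∑ j ∈ Sw \ S0, ((w j)⁻¹) ^ 2
  set κ : ℝ := n * lamInit * lamWeight / 4
  have hAW : ∑ j ∈ A, (w j)⁻¹ ^ 2 ≤ W :=
    Finset.sum_le_sum_of_subset_of_nonneg
      (Finset.sdiff_subset_sdiff Finset.inter_subset_left (Finset.Subset.refl S0))
      fun _ _ _ => sq_nonneg _
  have hcard : ∀ Λ', RestrictedNormBound X A Λ' → (A.card * κ) ^ 2 ≤ n * Λ' ^ 2 * W * R := by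
    refine fun Λ' hΛ' => (weightedLasso_card_mul_sq_le hn hlamInit hlamWeight hβw hnoise hΛ'
      (fun j hj => ?_) fun j _ => hw j).trans (by gcongr)
    simp only [A, Finset.mem_sdiff, Finset.mem_inter, Finset.mem_compl] at hj
    exact ⟨(hSw j).1 hj.1.1, hlww j hj.1.2⟩
  refine ⟨?_, fun hs hsA => ?_⟩
  · have h := hcard Λ hΛ
    rw [show 16 * Λ ^ 2 * (R / n / lamWeight ^ 2) * W / lamInit ^ 2 = n * Λ ^ 2 * W * R / κ ^ 2 by
      simp only [κ]; field_simp; ring, le_div_iff₀ (by positivity)]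
    linarith [mul_pow (A.card : ℝ) κ 2]
  · have h := hcard _ (RestrictedNormBound.of_forall_card_le hΛs hs hsA.le)
    have hA : (0 : ℝ) < A.card := by exact_mod_cast Nat.zero_lt_of_lt hsA
    rw [Real.sq_sqrt (by positivity)] at h
    rw [show 32 * Λs ^ 2 * (R / n / (lamWeight ^ 2 * S0.card)) * W / lamInit ^ 2
        = n * (2 * A.card / S0.card * Λs ^ 2) * W * R / (A.card * κ ^ 2) by
      simp only [κ]; field_simp; ring, le_div_iff₀ (by positivity)]
    linarith [mul_pow (A.card : ℝ) κ 2]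

/-- Variable-selection parts of Theorem `weightnoise` for the noisy weighted Lasso
on the event 𝒯. -/
theorem noisy_weighted_lasso_selection
    (n p : ℕ) (hn : 0 < n)
    (X : Matrix (Fin n) (Fin p) ℝ) (f0 : Fin n → ℝ)
    (ε : Fin n → ℝ) (Y : Fin n → ℝ) (hY : ∀ i, Y i = f0 i + ε i)
    (w : Fin p → ℝ) (hw : ∀ j, 0 < w j)
    (lamInit lamWeight : ℝ) (hlamInit : 0 < lamInit) (hlamWeight : 0 < lamWeight)
    (hnoise : ∀ j, 4 * |∑ i, ε i * X i j| / n ≤ lamInit)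
    (βw : Fin p → ℝ)
    (hβw : ∀ β : Fin p → ℝ,
      (∑ i, (Y i - X.mulVec βw i) ^ 2) / n + lamInit * lamWeight * ∑ j, w j * |βw j|
        ≤ (∑ i, (Y i - X.mulVec β i) ^ 2) / n + lamInit * lamWeight * ∑ j, w j * |β j|)
    (Sw : Finset (Fin p)) (hSw : ∀ j, j ∈ Sw ↔ βw j ≠ 0)
    (S S0 : Finset (Fin p))
    (hlww : ∀ j ∉ S, 1 ≤ lamWeight * w j)
    (Λ : ℝ) (hΛ0 : 0 ≤ Λ)
    (hΛ : ∀ γ : Fin p → ℝ, (∀ j ∉ (Sw ∩ Sᶜ) \ S0, γ j = 0) →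
      Real.sqrt ((∑ i, (X.mulVec γ i) ^ 2) / n) ≤ Λ * Real.sqrt (∑ j, (γ j) ^ 2))
    (Λs : ℝ) (hΛs0 : 0 ≤ Λs)
    (hΛs : ∀ T : Finset (Fin p), T.card ≤ S0.card →
      ∀ γ : Fin p → ℝ, (∀ j ∉ T, γ j = 0) →
      Real.sqrt ((∑ i, (X.mulVec γ i) ^ 2) / n) ≤ Λs * Real.sqrt (∑ j, (γ j) ^ 2)) :
    (((Sw ∩ Sᶜ) \ S0).card : ℝ) ^ 2
        ≤ 16 * Λ ^ 2 * (((∑ i, (X.mulVec βw i - f0 i) ^ 2) / n) / lamWeight ^ 2)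
            * (∑ j ∈ Sw \ S0, ((w j)⁻¹) ^ 2) / lamInit ^ 2
      ∧ (1 ≤ S0.card → S0.card < ((Sw ∩ Sᶜ) \ S0).card →
          (((Sw ∩ Sᶜ) \ S0).card : ℝ)
            ≤ 32 * Λs ^ 2
                * (((∑ i, (X.mulVec βw i - f0 i) ^ 2) / n) / (lamWeight ^ 2 * S0.card))
                * (∑ j ∈ Sw \ S0, ((w j)⁻¹) ^ 2) / lamInit ^ 2) :=
  noisy_weighted_lasso_selection_general n p hn X f0 ε Y hY w hw lamInit lamWeight hlamInit
    hlamWeight hnoise βw hβw Sw hSw S S0 hlww Λ hΛ Λs hΛs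
end

section
/- Let Y = f⁰ + ε with ε ∈ ℝ^n satisfying max_{1≤j≤p} 4|ε·ψ_j|/n ≤ λ_init (λ_init > 0). Let β̂_init be any minimizer over ℝ^p of β ↦ ‖Y − Xβ‖_n² + λ_init‖β‖_1, let Ŝ_init := {j : (β̂_init)_j ≠ 0}, and let β̂_adap be any minimizer of β ↦ ‖Y − Xβ‖_n² + λ_init·λ_adap·Σ_{j∈Ŝ_init} |β_j|/|(β̂_init)_j| over {β ∈ ℝ^p : β_j = 0 for all j ∉ Ŝ_init} (λ_adap > 0). Let S₀ ⊆ {1,…,p} be nonempty with s₀ := |S₀| and 2s₀ ≤ p, let b⁰ ∈ ℝ^p be supported on S₀ with Xb⁰ the orthogonal projection of f⁰ onto span{ψ_j : j ∈ S₀}, and set δ̂₂ := ‖β̂_init − b⁰‖_2. Let δ satisfy λ_adap ≥ δ ≥ δ̂₂/√s₀, and set Ŝ^δ := {j : |(β̂_init)_j| > δ}. Let φ_min > 0 be such that for every index set 𝒩 with S₀ ⊆ 𝒩 and |𝒩| = 2s₀, and every γ ∈ ℝ^p with ‖γ_{𝒩^c}‖_1 ≤ 6√(2s₀)·‖γ_𝒩‖_2,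 one has ‖Xγ‖_n ≥ φ_min‖γ_𝒩‖_2. Then for every β ∈ ℝ^p: ‖Xβ̂_adap − f⁰‖_n² ≤ 2‖Xβ_{Ŝ^δ} − f⁰‖_n² + 28·λ_init²·λ_adap²·s₀/(δ²·φ_min²). -/
open Finset

private lemma sqrt_sum_triangle {ι : Type*} (s : Finset ι) (u v : ι → ℝ) :
    Real.sqrt (∑ i ∈ s, (u i + v i) ^ 2)
      ≤ Real.sqrt (∑ i ∈ s, u i ^ 2) + Real.sqrt (∑ i ∈ s, v i ^ 2) := by
  have h := Real.sum_mul_le_sqrt_mul_sqrt s u v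
  have h1 : (0:ℝ) ≤ ∑ i ∈ s, u i ^ 2 := Finset.sum_nonneg fun i _ => sq_nonneg _
  have h2 : (0:ℝ) ≤ ∑ i ∈ s, v i ^ 2 := Finset.sum_nonneg fun i _ => sq_nonneg _
  have key : ∑ i ∈ s, (u i + v i) ^ 2
      ≤ (Real.sqrt (∑ i ∈ s, u i ^ 2) + Real.sqrt (∑ i ∈ s, v i ^ 2)) ^ 2 := by
    have hs : ∑ i ∈ s, (u i + v i) ^ 2
        = (∑ i ∈ s, u i ^ 2) + 2 * (∑ i ∈ s, u i * v i) + ∑ i ∈ s, v i ^ 2 := by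
      rw [Finset.mul_sum, ← Finset.sum_add_distrib, ← Finset.sum_add_distrib]
      exact Finset.sum_congr rfl fun i _ => by ring
    have e1 := Real.sq_sqrt h1
    have e2 := Real.sq_sqrt h2
    nlinarith [Real.sqrt_nonneg (∑ i ∈ s, u i ^ 2), Real.sqrt_nonneg (∑ i ∈ s, v i ^ 2)]
  calc Real.sqrt (∑ i ∈ s, (u i + v i) ^ 2)
      ≤ Real.sqrt ((Real.sqrt (∑ i ∈ s, u i ^ 2) + Real.sqrt (∑ i ∈ s, v i ^ 2)) ^ 2) :=
        Real.sqrt_le_sqrt key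
    _ = _ := Real.sqrt_sq (by positivity)

private lemma l1_le_sqrt_card {ι : Type*} (s : Finset ι) (f : ι → ℝ) :
    ∑ j ∈ s, |f j| ≤ Real.sqrt s.card * Real.sqrt (∑ j ∈ s, f j ^ 2) := by
  have h := Real.sum_mul_le_sqrt_mul_sqrt s (fun _ => (1:ℝ)) (fun j => |f j|)
  simpa [sq_abs] using h

set_option maxHeartbeats 2000000 in
/-- Prediction-error bound of Corollary `noisyadap.corollary` for the noisy
adaptive Lasso on the event 𝒯. -/
theorem noisy_adaptive_lasso_prediction
    (n p : ℕ) (hn : 0 < n)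
    (X : Matrix (Fin n) (Fin p) ℝ) (f0 : Fin n → ℝ)
    (ε : Fin n → ℝ) (Y : Fin n → ℝ) (hY : ∀ i, Y i = f0 i + ε i)
    (lamInit lamAdap : ℝ) (hlamInit : 0 < lamInit) (hlamAdap : 0 < lamAdap)
    (hnoise : ∀ j, 4 * |∑ i, ε i * X i j| / n ≤ lamInit)
    -- the initial Lasso
    (βinit : Fin p → ℝ)
    (hβinit : ∀ β : Fin p → ℝ,
      (∑ i, (Y i - X.mulVec βinit i) ^ 2) / n + lamInit * ∑ j, |βinit j|
        ≤ (∑ i, (Y i - X.mulVec β i) ^ 2) / n + lamInit * ∑ j, |β j|)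
    (Sinit : Finset (Fin p)) (hSinit : ∀ j, j ∈ Sinit ↔ βinit j ≠ 0)
    -- the adaptive Lasso: minimizer over vectors vanishing outside `Sinit`
    (βadap : Fin p → ℝ)
    (hadapsupp : ∀ j ∉ Sinit, βadap j = 0)
    (hβadap : ∀ β : Fin p → ℝ, (∀ j ∉ Sinit, β j = 0) →
      (∑ i, (Y i - X.mulVec βadap i) ^ 2) / n
          + lamInit * lamAdap * ∑ j ∈ Sinit, |βadap j| / |βinit j|
        ≤ (∑ i, (Y i - X.mulVec β i) ^ 2) / n
          + lamInit * lamAdap * ∑ j ∈ Sinit, |β j| / |βinit j|)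
    -- the oracle
    (S0 : Finset (Fin p)) (hS0 : S0.Nonempty) (hS0p : 2 * S0.card ≤ p)
    (b0 : Fin p → ℝ)
    (hb0supp : ∀ j ∉ S0, b0 j = 0)
    (hb0proj : ∀ j ∈ S0, ∑ i, (X.mulVec b0 i - f0 i) * X i j = 0)
    (δ2hat : ℝ) (hδ2hat : δ2hat = Real.sqrt (∑ j, (βinit j - b0 j) ^ 2))
    -- the threshold level
    (δ : ℝ) (hδupper : δ ≤ lamAdap) (hδlower : δ2hat / Real.sqrt (S0.card) ≤ δ)
    (Sδ : Finset (Fin p)) (hSδ : ∀ j, j ∈ Sδ ↔ δ < |βinit j|)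
    -- minimal restricted eigenvalue `φ_min(6, S0, 2s0)`
    (φmin : ℝ) (hφmin : 0 < φmin)
    (hRE : ∀ N : Finset (Fin p), S0 ⊆ N → N.card = 2 * S0.card →
      ∀ γ : Fin p → ℝ,
        (∑ j ∈ Nᶜ, |γ j|)
            ≤ 6 * Real.sqrt ((2 * S0.card : ℕ)) * Real.sqrt (∑ j ∈ N, (γ j) ^ 2) →
        φmin * Real.sqrt (∑ j ∈ N, (γ j) ^ 2) ≤ Real.sqrt ((∑ i, (X.mulVec γ i) ^ 2) / n))
    (β : Fin p → ℝ) :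
    (∑ i, (X.mulVec βadap i - f0 i) ^ 2) / n
      ≤ 2 * ((∑ i, (X.mulVec (fun j => if j ∈ Sδ then β j else 0) i - f0 i) ^ 2) / n)
        + 28 * lamInit ^ 2 * lamAdap ^ 2 * S0.card / (δ ^ 2 * φmin ^ 2) := by
  have hn' : (0:ℝ) < (n:ℝ) := by exact_mod_cast hn
  have hnne : (n:ℝ) ≠ 0 := ne_of_gt hn'
  have hs0pos : 0 < S0.card := Finset.card_pos.mpr hS0
  have hs0R : (0:ℝ) < (S0.card:ℝ) := by exact_mod_cast hs0pos
  have hδ2nn : 0 ≤ δ2hat := hδ2hat ▸ Real.sqrt_nonneg _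
  have hδ0 : 0 ≤ δ := le_trans (div_nonneg hδ2nn (Real.sqrt_nonneg _)) hδlower
  set tβ : Fin p → ℝ := fun j => if j ∈ Sδ then β j else 0 with htβdef
  have hquad : ∀ b : Fin p → ℝ, (∑ i, (Y i - X.mulVec b i) ^ 2)
      = (∑ i, (X.mulVec b i - f0 i) ^ 2)
        - 2 * (∑ i, ε i * (X.mulVec b i - f0 i)) + ∑ i, ε i ^ 2 := by
    intro b
    rw [Finset.mul_sum, ← Finset.sum_sub_distrib, ← Finset.sum_add_distrib]
    refine Finset.sum_congr rfl fun i _ => ?_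
    rw [hY i]; ring
  have hE0nn : (0:ℝ) ≤ (∑ i, (X.mulVec tβ i - f0 i) ^ 2) / n :=
    div_nonneg (Finset.sum_nonneg fun i _ => sq_nonneg _) hn'.le
  have hEnn : (0:ℝ) ≤ (∑ i, (X.mulVec βadap i - f0 i) ^ 2) / n :=
    div_nonneg (Finset.sum_nonneg fun i _ => sq_nonneg _) hn'.le
  rcases hδ0.eq_or_lt with hδz | hδpos
  · -- δ = 0 case
    have hsq : (0:ℝ) < Real.sqrt (S0.card:ℝ) := Real.sqrt_pos.mpr hs0R
    have h0' : δ2hat ≤ 0 := by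
      have h := (div_le_iff₀ hsq).mp hδlower
      rw [← hδz] at h
      simpa using h
    have hδ2z : δ2hat = 0 := le_antisymm h0' hδ2nn
    have hsum0 : ∑ j, (βinit j - b0 j) ^ 2 = 0 := by
      have h := hδ2hat
      rw [hδ2z] at h
      exact (Real.sqrt_eq_zero (Finset.sum_nonneg fun j _ => sq_nonneg _)).mp h.symm
    have hbb : βinit = b0 := by
      funext j
      have h := (Finset.sum_eq_zero_iff_of_nonneg
        (fun j _ => sq_nonneg (βinit j - b0 j))).mp hsum0 j (Finset.mem_univ j)
      have h2 := pow_eq_zero_iff (by norm_num : 2 ≠ 0) |>.mp h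
      linarith [h2]
    subst hbb
    have hzero : ∀ j, βinit j = 0 := by
      intro j
      by_contra hjne
      have hjS0 : j ∈ S0 := by
        by_contra hj
        exact hjne (hb0supp j hj)
      have hproj := hb0proj j hjS0
      have hC0 : (0:ℝ) ≤ ∑ i, X i j ^ 2 := Finset.sum_nonneg fun i _ => sq_nonneg _
      set σ : ℝ := if 0 < βinit j then 1 else -1 with hσdef
      have hσ2 : σ ^ 2 = 1 := by rw [hσdef]; split_ifs <;> norm_num
      have hσe : σ * (∑ i, ε i * X i j) ≤ |∑ i, ε i * X i j| := by
        rw [hσdef]; split_ifs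
        · rw [one_mul]; exact le_abs_self _
        · rw [neg_one_mul]; exact neg_le_abs _
      have habs : ∀ s : ℝ, 0 < s → s < |βinit j| → |βinit j - σ * s| = |βinit j| - s := by
        intro s hs hslt
        rcases lt_or_gt_of_ne hjne with hneg | hpos
        · have hd : σ = -1 := by rw [hσdef, if_neg (not_lt.mpr hneg.le)]
          have habs1 : |βinit j| = -βinit j := abs_of_neg hneg
          rw [habs1] at hslt
          rw [hd, habs1]
          have hlt : βinit j - (-1) * s < 0 := by linarith
          rw [abs_of_neg hlt]; ring
        · have hd : σ = 1 := by rw [hσdef, if_pos hpos]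
          have habs1 : |βinit j| = βinit j := abs_of_pos hpos
          rw [habs1] at hslt
          rw [hd, habs1]
          have hlt : 0 < βinit j - 1 * s := by linarith
          rw [abs_of_pos hlt]; ring
      have key : ∀ s : ℝ, 0 < s → s < |βinit j| →
          lamInit - 2 * σ * (∑ i, ε i * X i j) / n ≤ s * ((∑ i, X i j ^ 2) / n) := by
        intro s hs hslt
        set βt : Fin p → ℝ := fun j' => if j' = j then βinit j - σ * s else βinit j' with hβtdef
        have hβtj : βt j = βinit j - σ * s := by simp [hβtdef]
        have hβto : ∀ j', j' ≠ j → βt j' = βinit j' := fun j' h => by simp [hβtdef, h]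
        have hmv : ∀ i, X.mulVec βt i = X.mulVec βinit i - σ * s * X i j := by
          intro i
          have hdiff : X.mulVec βt i - X.mulVec βinit i
              = ∑ j', (if j' = j then -(X i j' * (σ * s)) else 0) := by
            simp only [Matrix.mulVec, dotProduct, ← Finset.sum_sub_distrib]
            refine Finset.sum_congr rfl fun j' _ => ?_
            by_cases h : j' = j
            · rw [if_pos h, h, hβtj]; ring
            · rw [if_neg h, hβto j' h]; ring
          rw [Finset.sum_ite_eq' Finset.univ j (fun j' => -(X i j' * (σ * s)))] at hdiff
          simp only [Finset.mem_univ, if_true] at hdiff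
          linear_combination hdiff
        have hcross : (∑ i, (Y i - X.mulVec βinit i) * X i j) = ∑ i, ε i * X i j := by
          have h1 : ∀ i, (Y i - X.mulVec βinit i) * X i j
              = ε i * X i j - (X.mulVec βinit i - f0 i) * X i j := by
            intro i; rw [hY i]; ring
          simp only [h1]
          rw [Finset.sum_sub_distrib, hproj, sub_zero]
        have hQ : (∑ i, (Y i - X.mulVec βt i) ^ 2)
            = (∑ i, (Y i - X.mulVec βinit i) ^ 2)
              + 2 * σ * s * (∑ i, (Y i - X.mulVec βinit i) * X i j)
              + s ^ 2 * (∑ i, X i j ^ 2) := by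
          rw [Finset.mul_sum, Finset.mul_sum, ← Finset.sum_add_distrib, ← Finset.sum_add_distrib]
          refine Finset.sum_congr rfl fun i _ => ?_
          rw [hmv i]
          linear_combination (s ^ 2 * X i j ^ 2) * hσ2
        have hpen : (∑ j', |βt j'|) = (∑ j', |βinit j'|) - s := by
          rw [← Finset.sum_erase_add _ _ (Finset.mem_univ j),
            ← Finset.sum_erase_add _ (fun j' => |βinit j'|) (Finset.mem_univ j)]
          have h1 : ∑ j' ∈ Finset.univ.erase j, |βt j'|
              = ∑ j' ∈ Finset.univ.erase j, |βinit j'| :=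
            Finset.sum_congr rfl fun j' hj' => by
              rw [hβto j' (Finset.ne_of_mem_erase hj')]
          have h2 : |βt j| = |βinit j| - s := by
            rw [hβtj]; exact habs s hs hslt
          rw [h1, h2]; ring
        have hineq := hβinit βt
        rw [hQ, hcross, hpen] at hineq
        have hsplit : ((∑ i, (Y i - X.mulVec βinit i) ^ 2)
              + 2 * σ * s * (∑ i, ε i * X i j) + s ^ 2 * (∑ i, X i j ^ 2)) / (n:ℝ)
            = (∑ i, (Y i - X.mulVec βinit i) ^ 2) / n
              + (2 * σ * s * (∑ i, ε i * X i j) + s ^ 2 * (∑ i, X i j ^ 2)) / n := by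
          rw [add_assoc, add_div]
        rw [hsplit] at hineq
        have hgap : lamInit * s
            ≤ (2 * σ * s * (∑ i, ε i * X i j) + s ^ 2 * (∑ i, X i j ^ 2)) / n := by
          linarith only [hineq]
        have hr : (2 * σ * s * (∑ i, ε i * X i j) + s ^ 2 * (∑ i, X i j ^ 2)) / (n:ℝ)
            = s * (2 * σ * (∑ i, ε i * X i j) / n + s * ((∑ i, X i j ^ 2) / n)) := by
          field_simp
        rw [hr] at hgap
        have h4 : s * lamInit
            ≤ s * (2 * σ * (∑ i, ε i * X i j) / n + s * ((∑ i, X i j ^ 2) / n)) := by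
          linarith only [hgap]
        have h3 := le_of_mul_le_mul_left h4 hs
        linarith only [h3]
      have he := hnoise j
      have ha : lamInit / 2 ≤ lamInit - 2 * σ * (∑ i, ε i * X i j) / n := by
        have h2 : 2 * (σ * (∑ i, ε i * X i j)) / n ≤ 2 * |∑ i, ε i * X i j| / n :=
          (div_le_div_iff_of_pos_right hn').mpr (by linarith [hσe])
        have h3 : 2 * |∑ i, ε i * X i j| / n ≤ lamInit / 2 := by
          have h4 : 4 * |∑ i, ε i * X i j| / n = 2 * (2 * |∑ i, ε i * X i j| / n) := by ring
          rw [h4] at he; linarith only [he]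
        have h5 : 2 * σ * (∑ i, ε i * X i j) / n = 2 * (σ * (∑ i, ε i * X i j)) / n := by
          ring
        linarith only [h2, h3, h5.le, h5.ge]
      have hβjpos : 0 < |βinit j| := abs_pos.mpr hjne
      have hD : 0 ≤ (∑ i, X i j ^ 2) / (n:ℝ) := div_nonneg hC0 hn'.le
      set s1 := min (|βinit j| / 2) ((lamInit / 2) / ((∑ i, X i j ^ 2) / n + 1)) with hs1def
      have hs1pos : 0 < s1 :=
        lt_min (by linarith) (div_pos (by linarith) (by linarith))
      have hs1lt : s1 < |βinit j| := lt_of_le_of_lt (min_le_left _ _) (by linarith)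
      have hk := key s1 hs1pos hs1lt
      have h4 : s1 * ((∑ i, X i j ^ 2) / n)
          ≤ ((lamInit / 2) / ((∑ i, X i j ^ 2) / n + 1)) * ((∑ i, X i j ^ 2) / n) :=
        mul_le_mul_of_nonneg_right (min_le_right _ _) hD
      have h5 : ((lamInit / 2) / ((∑ i, X i j ^ 2) / n + 1)) * ((∑ i, X i j ^ 2) / n)
          < lamInit / 2 := by
        rw [div_mul_eq_mul_div, div_lt_iff₀ (by linarith only [hD])]
        nlinarith [hlamInit, hD]
      linarith only [ha, hk, h4, h5]
    have hSinitempty : Sinit = ∅ :=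
      Finset.eq_empty_of_forall_notMem fun j hj => (hSinit j).mp hj (hzero j)
    have hβa0 : ∀ j', βadap j' = 0 := fun j' =>
      hadapsupp j' (by simp [hSinitempty])
    have htβ0 : ∀ j', tβ j' = 0 := by
      intro j'
      simp only [htβdef]
      refine if_neg fun hmem => ?_
      have h := (hSδ j').mp hmem
      rw [hzero j', abs_zero] at h
      linarith
    have hE : (∑ i, (X.mulVec βadap i - f0 i) ^ 2) = ∑ i, (X.mulVec tβ i - f0 i) ^ 2 := by
      refine Finset.sum_congr rfl fun i _ => ?_
      have h1 : X.mulVec βadap i = 0 := by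
        simp only [Matrix.mulVec, dotProduct]
        exact Finset.sum_eq_zero fun j _ => by rw [hβa0 j, mul_zero]
      have h2 : X.mulVec tβ i = 0 := by
        simp only [Matrix.mulVec, dotProduct]
        exact Finset.sum_eq_zero fun j _ => by rw [htβ0 j, mul_zero]
      rw [h1, h2]
    rw [← hδz, hE]
    norm_num
    linarith only [hE0nn]
  · -- δ > 0 case
    have hδne : δ ≠ 0 := ne_of_gt hδpos
    have hφne : φmin ≠ 0 := ne_of_gt hφmin
    have hSδsub : Sδ ⊆ Sinit := by
      intro j hj
      have h := (hSδ j).mp hj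
      exact (hSinit j).mpr (fun h0 => by rw [h0, abs_zero] at h; linarith)
    have htβsupp : ∀ j ∉ Sinit, tβ j = 0 := by
      intro j hj
      simp only [htβdef]
      exact if_neg fun hmem => hj (hSδsub hmem)
    have htβoff : ∀ j ∉ Sδ, tβ j = 0 := by
      intro j hj; simp only [htβdef]; exact if_neg hj
    set A := ∑ j ∈ Sδ, |βadap j - tβ j| with hAdef
    set B := ∑ j ∈ Sinit \ Sδ, |βadap j - tβ j| with hBdef
    have hA0 : 0 ≤ A := Finset.sum_nonneg fun _ _ => abs_nonneg _
    have hB0 : 0 ≤ B := Finset.sum_nonneg fun _ _ => abs_nonneg _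
    set lam := lamInit * lamAdap with hlamdef
    have hlam0 : 0 < lam := mul_pos hlamInit hlamAdap
    set μ := lam / δ with hμdef
    have hμ0 : 0 < μ := div_pos hlam0 hδpos
    have hLμ : lamInit ≤ μ := by
      rw [hμdef, le_div_iff₀ hδpos, hlamdef]
      exact mul_le_mul_of_nonneg_left hδupper hlamInit.le
    -- basic inequality
    have hkey := hβadap tβ htβsupp
    rw [hquad βadap, hquad tβ] at hkey
    have hdv : ∀ x y z : ℝ, (x - 2 * y + z) / (n:ℝ) = x / n - 2 * (y / n) + z / n := by
      intro x y z
      rw [add_div, sub_div, mul_div_assoc]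
    rw [hdv, hdv] at hkey
    -- noise term rewriting
    have hswap : (∑ j, (βadap j - tβ j) * (∑ i, ε i * X i j))
        = (∑ i, ε i * (X.mulVec βadap i - f0 i)) - ∑ i, ε i * (X.mulVec tβ i - f0 i) := by
      have h1 : ∀ j, (βadap j - tβ j) * (∑ i, ε i * X i j)
          = ∑ i, ε i * X i j * (βadap j - tβ j) := by
        intro j
        rw [Finset.mul_sum]
        exact Finset.sum_congr rfl fun i _ => by ring
      simp only [h1]
      rw [Finset.sum_comm, ← Finset.sum_sub_distrib]
      refine Finset.sum_congr rfl fun i _ => ?_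
      simp only [Matrix.mulVec, dotProduct]
      have h2 : ε i * ((∑ j, X i j * βadap j) - f0 i) - ε i * ((∑ j, X i j * tβ j) - f0 i)
          = ε i * (∑ j, X i j * βadap j) - ε i * (∑ j, X i j * tβ j) := by ring
      rw [h2, Finset.mul_sum, Finset.mul_sum, ← Finset.sum_sub_distrib]
      exact Finset.sum_congr rfl fun j _ => by ring
    have huniv : ∑ j ∈ Sinit, |βadap j - tβ j| = ∑ j, |βadap j - tβ j| :=
      Finset.sum_subset (Finset.subset_univ _) (fun j _ hj => by
        rw [hadapsupp j hj, htβsupp j hj]; simp)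
    have hsum1 : (∑ j, |βadap j - tβ j|) = B + A := by
      rw [← huniv, ← Finset.sum_sdiff hSδsub]
    have hnoisebd : 2 * ((∑ j, (βadap j - tβ j) * (∑ i, ε i * X i j)) / n)
        ≤ (lamInit / 2) * (A + B) := by
      have h1 : ∀ j : Fin p, (2 / (n:ℝ)) * ((βadap j - tβ j) * (∑ i, ε i * X i j))
          ≤ |βadap j - tβ j| * (lamInit / 2) := by
        intro j
        have he2 : 2 * |∑ i, ε i * X i j| / n ≤ lamInit / 2 := by
          have h := hnoise j
          have h4 : 4 * |∑ i, ε i * X i j| / n = 2 * (2 * |∑ i, ε i * X i j| / n) := by ring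
          rw [h4] at h; linarith only [h]
        have h2 : (βadap j - tβ j) * (∑ i, ε i * X i j)
            ≤ |βadap j - tβ j| * |∑ i, ε i * X i j| := by
          calc (βadap j - tβ j) * (∑ i, ε i * X i j)
              ≤ |(βadap j - tβ j) * (∑ i, ε i * X i j)| := le_abs_self _
            _ = _ := abs_mul _ _
        calc (2 / (n:ℝ)) * ((βadap j - tβ j) * (∑ i, ε i * X i j))
            ≤ (2 / (n:ℝ)) * (|βadap j - tβ j| * |∑ i, ε i * X i j|) :=
              mul_le_mul_of_nonneg_left h2 (by positivity)
          _ = |βadap j - tβ j| * (2 * |∑ i, ε i * X i j| / n) := by ring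
          _ ≤ |βadap j - tβ j| * (lamInit / 2) :=
              mul_le_mul_of_nonneg_left he2 (abs_nonneg _)
      calc 2 * ((∑ j, (βadap j - tβ j) * (∑ i, ε i * X i j)) / n)
          = (2 / (n:ℝ)) * ∑ j, ((βadap j - tβ j) * (∑ i, ε i * X i j)) := by ring
        _ = ∑ j, (2 / (n:ℝ)) * ((βadap j - tβ j) * (∑ i, ε i * X i j)) :=
            Finset.mul_sum _ _ _
        _ ≤ ∑ j, |βadap j - tβ j| * (lamInit / 2) := Finset.sum_le_sum fun j _ => h1 j
        _ = (∑ j, |βadap j - tβ j|) * (lamInit / 2) := by rw [← Finset.sum_mul]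
        _ = (lamInit / 2) * (A + B) := by rw [hsum1]; ring
    -- penalty bound
    have hpen : lam * (∑ j ∈ Sinit, |tβ j| / |βinit j|)
          - lam * (∑ j ∈ Sinit, |βadap j| / |βinit j|)
        ≤ μ * A - μ * B := by
      have h0 : ∀ s : Finset (Fin p),
          ∑ j ∈ s, (|tβ j| - |βadap j|) / |βinit j|
            = (∑ j ∈ s, |tβ j| / |βinit j|) - ∑ j ∈ s, |βadap j| / |βinit j| := by
        intro s
        rw [← Finset.sum_sub_distrib]
        exact Finset.sum_congr rfl fun j _ => sub_div _ _ _
      have hsplit : (∑ j ∈ Sinit, |tβ j| / |βinit j|) - (∑ j ∈ Sinit, |βadap j| / |βinit j|)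
          = (∑ j ∈ Sinit \ Sδ, (|tβ j| - |βadap j|) / |βinit j|)
            + ∑ j ∈ Sδ, (|tβ j| - |βadap j|) / |βinit j| := by
        rw [← h0 Sinit, ← Finset.sum_sdiff hSδsub]
      have hb1 : ∑ j ∈ Sinit \ Sδ, (|tβ j| - |βadap j|) / |βinit j| ≤ -(B / δ) := by
        have heq : -(B / δ) = ∑ j ∈ Sinit \ Sδ, -(|βadap j - tβ j| / δ) := by
          rw [Finset.sum_neg_distrib, ← Finset.sum_div, ← hBdef]
        rw [heq]
        refine Finset.sum_le_sum fun j hj => ?_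
        rcases Finset.mem_sdiff.mp hj with ⟨hj1, hj2⟩
        have hw0 : 0 < |βinit j| := abs_pos.mpr ((hSinit j).mp hj1)
        have hwδ : |βinit j| ≤ δ := not_lt.mp (fun h => hj2 ((hSδ j).mpr h))
        rw [htβoff j hj2, abs_zero, zero_sub, sub_zero, neg_div]
        exact neg_le_neg (div_le_div_of_nonneg_left (abs_nonneg _) hw0 hwδ)
      have hb2 : ∑ j ∈ Sδ, (|tβ j| - |βadap j|) / |βinit j| ≤ A / δ := by
        have heq : A / δ = ∑ j ∈ Sδ, |βadap j - tβ j| / δ := by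
          rw [← Finset.sum_div, ← hAdef]
        rw [heq]
        refine Finset.sum_le_sum fun j hj => ?_
        have hwgt : δ < |βinit j| := (hSδ j).mp hj
        have hw0 : 0 < |βinit j| := lt_trans hδpos hwgt
        have hnum : |tβ j| - |βadap j| ≤ |βadap j - tβ j| := by
          calc |tβ j| - |βadap j| ≤ |tβ j - βadap j| := abs_sub_abs_le_abs_sub _ _
            _ = |βadap j - tβ j| := abs_sub_comm _ _
        calc (|tβ j| - |βadap j|) / |βinit j| ≤ |βadap j - tβ j| / |βinit j| :=
              (div_le_div_iff_of_pos_right hw0).mpr hnum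
          _ ≤ |βadap j - tβ j| / δ :=
              div_le_div_of_nonneg_left (abs_nonneg _) hδpos hwgt.le
      have h1 : (∑ j ∈ Sinit, |tβ j| / |βinit j|) - (∑ j ∈ Sinit, |βadap j| / |βinit j|)
          ≤ A / δ - B / δ := by rw [hsplit]; linarith only [hb1, hb2]
      have h2 : lam * ((∑ j ∈ Sinit, |tβ j| / |βinit j|)
            - (∑ j ∈ Sinit, |βadap j| / |βinit j|)) ≤ lam * (A / δ - B / δ) :=
        mul_le_mul_of_nonneg_left h1 hlam0.le
      have h3 : lam * (A / δ - B / δ) = μ * A - μ * B := by rw [hμdef]; ring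
      linarith only [h2, h3]
    -- the key inequality
    have hsub : (∑ i, ε i * (X.mulVec βadap i - f0 i)) / (n:ℝ)
          - (∑ i, ε i * (X.mulVec tβ i - f0 i)) / n
        = (∑ j, (βadap j - tβ j) * (∑ i, ε i * X i j)) / n := by
      rw [hswap, sub_div]
    have hLmul : lamInit * (A + B) ≤ μ * (A + B) :=
      mul_le_mul_of_nonneg_right hLμ (by linarith)
    have hstar : (∑ i, (X.mulVec βadap i - f0 i) ^ 2) / (n:ℝ)
        ≤ (∑ i, (X.mulVec tβ i - f0 i) ^ 2) / n + (3/2) * μ * A - (1/2) * μ * B := by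
      linarith only [hkey, hsub, hnoisebd, hpen, hLmul, hA0, hB0]
    rcases le_or_gt ((3/2) * μ * A) ((∑ i, (X.mulVec tβ i - f0 i) ^ 2) / (n:ℝ))
      with hcase | hcase
    · have hT : 0 ≤ 28 * lamInit ^ 2 * lamAdap ^ 2 * (S0.card:ℝ) / (δ ^ 2 * φmin ^ 2) :=
        div_nonneg (by positivity) (by positivity)
      have hμB : 0 ≤ μ * B := mul_nonneg hμ0.le hB0
      linarith only [hstar, hcase, hμB, hT]
    · have hB6A : B ≤ 6 * A := by
        have h1 : μ * B ≤ μ * (6 * A) := by linarith only [hstar, hEnn, hcase]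
        exact le_of_mul_le_mul_left h1 hμ0
      -- cardinality bound
      have hcard1' : (Sδ \ S0).card ≤ S0.card := by
        have hsum : ((Sδ \ S0).card : ℝ) * δ ^ 2 ≤ ∑ j ∈ Sδ \ S0, (βinit j - b0 j) ^ 2 := by
          calc ((Sδ \ S0).card : ℝ) * δ ^ 2 = ∑ _j ∈ Sδ \ S0, δ ^ 2 := by
                rw [Finset.sum_const, nsmul_eq_mul]
            _ ≤ ∑ j ∈ Sδ \ S0, (βinit j - b0 j) ^ 2 := by
                refine Finset.sum_le_sum fun j hj => ?_
                rcases Finset.mem_sdiff.mp hj with ⟨hj1, hj2⟩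
                rw [hb0supp j hj2, sub_zero]
                have hd := (hSδ j).mp hj1
                calc δ ^ 2 ≤ |βinit j| ^ 2 := by nlinarith [abs_nonneg (βinit j)]
                  _ = βinit j ^ 2 := sq_abs _
        have hsum2 : ∑ j ∈ Sδ \ S0, (βinit j - b0 j) ^ 2 ≤ ∑ j, (βinit j - b0 j) ^ 2 :=
          Finset.sum_le_sum_of_subset_of_nonneg (Finset.subset_univ _)
            fun j _ _ => sq_nonneg _
        have hδ2sq : ∑ j, (βinit j - b0 j) ^ 2 = δ2hat ^ 2 := by
          rw [hδ2hat, Real.sq_sqrt (Finset.sum_nonneg fun j _ => sq_nonneg _)]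
        have hup : δ2hat ^ 2 ≤ δ ^ 2 * S0.card := by
          have hsq : (0:ℝ) < Real.sqrt (S0.card:ℝ) := Real.sqrt_pos.mpr hs0R
          have h1 : δ2hat ≤ δ * Real.sqrt (S0.card:ℝ) := by
            rw [div_le_iff₀ hsq] at hδlower; linarith
          have h2 := mul_self_le_mul_self hδ2nn h1
          have h3 : (Real.sqrt ((S0.card:ℝ))) ^ 2 = (S0.card:ℝ) := Real.sq_sqrt hs0R.le
          nlinarith
        have hfinal : ((Sδ \ S0).card : ℝ) * δ ^ 2 ≤ (S0.card:ℝ) * δ ^ 2 := by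
          linarith only [hsum, hsum2, hδ2sq, hup]
        exact_mod_cast le_of_mul_le_mul_right hfinal (by positivity)
      have hcardU : (S0 ∪ Sδ).card ≤ 2 * S0.card := by
        have h := Finset.card_sdiff_add_card Sδ S0
        rw [Finset.union_comm]
        omega
      obtain ⟨N, hNsub, hNcard⟩ := Finset.exists_superset_card_eq hcardU
        (by simpa using hS0p)
      have hS0N : S0 ⊆ N := le_trans Finset.subset_union_left hNsub
      have hSδN : Sδ ⊆ N := le_trans Finset.subset_union_right hNsub
      set a := Real.sqrt (∑ j ∈ N, (βadap j - tβ j) ^ 2) with hadef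
      set r := Real.sqrt ((2 * S0.card : ℕ)) with hrdef
      have ha0 : 0 ≤ a := Real.sqrt_nonneg _
      have hr0 : 0 ≤ r := Real.sqrt_nonneg _
      have hAa : A ≤ r * a := by
        calc A ≤ Real.sqrt (Sδ.card) * Real.sqrt (∑ j ∈ Sδ, (βadap j - tβ j) ^ 2) :=
              l1_le_sqrt_card _ _
          _ ≤ r * a := by
              apply mul_le_mul
              · rw [hrdef]
                apply Real.sqrt_le_sqrt
                have hcc : Sδ.card ≤ 2 * S0.card := hNcard ▸ Finset.card_le_card hSδN
                exact_mod_cast hcc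
              · rw [hadef]
                apply Real.sqrt_le_sqrt
                exact Finset.sum_le_sum_of_subset_of_nonneg hSδN fun j _ _ => sq_nonneg _
              · exact Real.sqrt_nonneg _
              · exact hr0
      have hcone : (∑ j ∈ Nᶜ, |βadap j - tβ j|) ≤ 6 * r * a := by
        have h1 : (∑ j ∈ Nᶜ, |βadap j - tβ j|) ≤ B := by
          have e1 : ∑ j ∈ Nᶜ, |βadap j - tβ j| = ∑ j ∈ Nᶜ ∩ Sinit, |βadap j - tβ j| :=
            (Finset.sum_subset Finset.inter_subset_left (fun j hj hj2 => by
              have hjs : j ∉ Sinit := fun h => hj2 (Finset.mem_inter.mpr ⟨hj, h⟩)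
              rw [hadapsupp j hjs, htβsupp j hjs]; simp)).symm
          rw [e1, hBdef]
          apply Finset.sum_le_sum_of_subset_of_nonneg
          · intro j hj
            rcases Finset.mem_inter.mp hj with ⟨hjc, hjs⟩
            exact Finset.mem_sdiff.mpr
              ⟨hjs, fun hmem => (Finset.mem_compl.mp hjc) (hSδN hmem)⟩
          · exact fun j _ _ => abs_nonneg _
        calc (∑ j ∈ Nᶜ, |βadap j - tβ j|) ≤ B := h1
          _ ≤ 6 * A := hB6A
          _ ≤ 6 * (r * a) := by linarith only [hAa]
          _ = 6 * r * a := by ring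
      have hREa : φmin * a
          ≤ Real.sqrt ((∑ i, (X.mulVec (fun j => βadap j - tβ j) i) ^ 2) / n) := by
        have h := hRE N hS0N hNcard (fun j => βadap j - tβ j) (by simpa using hcone)
        simpa using h
      -- triangle inequality
      have hmvγ : ∀ i, X.mulVec (fun j => βadap j - tβ j) i
          = (X.mulVec βadap i - f0 i) + (f0 i - X.mulVec tβ i) := by
        intro i
        simp only [Matrix.mulVec, dotProduct]
        have h1 : ∑ j, X i j * (βadap j - tβ j)
            = (∑ j, X i j * βadap j) - ∑ j, X i j * tβ j := by
          rw [← Finset.sum_sub_distrib]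
          exact Finset.sum_congr rfl fun j _ => by ring
        rw [h1]; ring
      have htri : Real.sqrt ((∑ i, (X.mulVec (fun j => βadap j - tβ j) i) ^ 2) / n)
          ≤ Real.sqrt ((∑ i, (X.mulVec βadap i - f0 i) ^ 2) / n)
            + Real.sqrt ((∑ i, (X.mulVec tβ i - f0 i) ^ 2) / n) := by
        have h1 : (∑ i, (X.mulVec (fun j => βadap j - tβ j) i) ^ 2)
            = ∑ i, ((X.mulVec βadap i - f0 i) + (f0 i - X.mulVec tβ i)) ^ 2 :=
          Finset.sum_congr rfl fun i _ => by rw [hmvγ i]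
        have h2 := sqrt_sum_triangle Finset.univ (fun i => X.mulVec βadap i - f0 i)
          (fun i => f0 i - X.mulVec tβ i)
        have h3 : ∑ i, (f0 i - X.mulVec tβ i) ^ 2 = ∑ i, (X.mulVec tβ i - f0 i) ^ 2 :=
          Finset.sum_congr rfl fun i _ => by ring
        rw [h3] at h2
        rw [h1, Real.sqrt_div (Finset.sum_nonneg fun i _ => sq_nonneg _),
          Real.sqrt_div (Finset.sum_nonneg fun i _ => sq_nonneg _),
          Real.sqrt_div (Finset.sum_nonneg fun i _ => sq_nonneg _), ← add_div]
        gcongr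
      have ha2 : a ≤ (Real.sqrt ((∑ i, (X.mulVec βadap i - f0 i) ^ 2) / (n:ℝ))
            + Real.sqrt ((∑ i, (X.mulVec tβ i - f0 i) ^ 2) / n)) / φmin := by
        rw [le_div_iff₀ hφmin]
        calc a * φmin = φmin * a := mul_comm _ _
          _ ≤ _ := hREa.trans htri
      set sE := Real.sqrt ((∑ i, (X.mulVec βadap i - f0 i) ^ 2) / (n:ℝ)) with hsEdef
      set sE0 := Real.sqrt ((∑ i, (X.mulVec tβ i - f0 i) ^ 2) / (n:ℝ)) with hsE0def
      have hsE : sE ^ 2 = (∑ i, (X.mulVec βadap i - f0 i) ^ 2) / (n:ℝ) := Real.sq_sqrt hEnn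
      have hsE0 : sE0 ^ 2 = (∑ i, (X.mulVec tβ i - f0 i) ^ 2) / (n:ℝ) := Real.sq_sqrt hE0nn
      set c := (3/2) * lam * r / (δ * φmin) with hcdef
      have hc0 : 0 ≤ c := by
        rw [hcdef]
        apply div_nonneg
        · exact mul_nonneg (mul_nonneg (by norm_num) hlam0.le) hr0
        · exact mul_nonneg hδpos.le hφmin.le
      have hchain : (∑ i, (X.mulVec βadap i - f0 i) ^ 2) / (n:ℝ)
          ≤ (∑ i, (X.mulVec tβ i - f0 i) ^ 2) / n + c * sE + c * sE0 := by
        have h1 : (∑ i, (X.mulVec βadap i - f0 i) ^ 2) / (n:ℝ)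
            ≤ (∑ i, (X.mulVec tβ i - f0 i) ^ 2) / n + (3/2) * μ * A := by
          have hμB := mul_nonneg hμ0.le hB0
          linarith only [hstar, hμB]
        have h2 : (3/2) * μ * A ≤ (3/2) * μ * (r * a) :=
          mul_le_mul_of_nonneg_left hAa (mul_nonneg (by norm_num) hμ0.le)
        have h3' := mul_le_mul_of_nonneg_left ha2
          (mul_nonneg (mul_nonneg (by norm_num : (0:ℝ) ≤ 3/2) hμ0.le) hr0)
        have h4 : (3/2) * μ * r * ((sE + sE0) / φmin) = c * sE + c * sE0 := by
          rw [hcdef, hμdef]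
          field_simp
        linarith only [h1, h2, h3', h4]
      have hAM1 : c * sE ≤ ((∑ i, (X.mulVec βadap i - f0 i) ^ 2) / (n:ℝ)) / 4 + c ^ 2 := by
        linarith only [sq_nonneg (c - sE / 2), hsE]
      have hAM2 : c * sE0 ≤ ((∑ i, (X.mulVec tβ i - f0 i) ^ 2) / (n:ℝ)) / 2 + c ^ 2 / 2 := by
        linarith only [sq_nonneg (c - sE0), hsE0]
      have hr2 : r ^ 2 = 2 * (S0.card:ℝ) := by
        rw [hrdef, Real.sq_sqrt (by positivity)]
        push_cast; ring
      have h2c : 2 * c ^ 2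
          = 9 * lamInit ^ 2 * lamAdap ^ 2 * (S0.card:ℝ) / (δ ^ 2 * φmin ^ 2) := by
        have h5 : 2 * c ^ 2 = (9/2) * lam ^ 2 * r ^ 2 / (δ ^ 2 * φmin ^ 2) := by
          rw [hcdef]; field_simp; ring
        rw [h5, hr2, hlamdef]; field_simp
      have hnn : 0 ≤ lamInit ^ 2 * lamAdap ^ 2 * (S0.card:ℝ) / (δ ^ 2 * φmin ^ 2) :=
        div_nonneg (by positivity) (by positivity)
      have h19 : 28 * lamInit ^ 2 * lamAdap ^ 2 * (S0.card:ℝ) / (δ ^ 2 * φmin ^ 2)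
            - 9 * lamInit ^ 2 * lamAdap ^ 2 * (S0.card:ℝ) / (δ ^ 2 * φmin ^ 2)
          = 19 * (lamInit ^ 2 * lamAdap ^ 2 * (S0.card:ℝ) / (δ ^ 2 * φmin ^ 2)) := by ring
      linarith only [hchain, hAM1, hAM2, h2c, hnn, h19]
end
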